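/- For every bilinear form T : ℓ∞^n × ℓ∞^n → ℝ (i.e. T : ℝⁿ × ℝⁿ → ℝ with norm taken over the sup-norm unit balls), (Σ_{i=1}^n (Σ_{j=1}^n |T(e_i,e_j)|²)^{1/2}) ≤ √2 · ‖T‖, where ‖T‖ = sup{|T(x,y)| : ‖x‖_∞ ≤ 1, ‖y‖_∞ ≤ 1}. -/
import Mathlib

open Finset

namespace Stmt19

variable {n : ℕ}

/-- sign of a boolean, as a real number -/
def sg (b : Bool) : ℝ := bif b then 1 else -1

lemma sg_mul_self (b : Bool) : sg b * sg b = 1 := by cases b <;> norm_num [sg]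
lemma sg_not (b : Bool) : sg (!b) = - sg b := by cases b <;> norm_num [sg]
lemma abs_sg (b : Bool) : |sg b| = 1 := by cases b <;> norm_num [sg]

/-- flipping coordinate `i` of a sign vector -/
def flip (i : Fin n) (ω : Fin n → Bool) : Fin n → Bool :=
  Function.update ω i (!(ω i))

lemma flip_apply_self (i : Fin n) (ω : Fin n → Bool) : flip i ω i = !(ω i) := by
  simp [flip]

lemma flip_apply_ne (i k : Fin n) (ω : Fin n → Bool) (h : k ≠ i) : flip i ω k = ω k := by
  simp [flip, Function.update_of_ne h]

lemma flip_involutive (i : Fin n) : Function.Involutive (flip i) := by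
  intro ω
  funext k
  by_cases h : k = i
  · subst h; simp [flip]
  · simp [flip_apply_ne _ _ _ h, flip, Function.update_of_ne h]

/-- flip as a permutation -/
def flipP (i : Fin n) : Equiv.Perm (Fin n → Bool) :=
  Function.Involutive.toPerm _ (flip_involutive i)

lemma flipP_apply (i : Fin n) (ω : Fin n → Bool) : flipP i ω = flip i ω := rfl

/-- global negation -/
def negA (ω : Fin n → Bool) : Fin n → Bool := fun k => !(ω k)

lemma negA_involutive : Function.Involutive (negA (n := n)) := by
  intro ω; funext k; simp [negA]

def negP : Equiv.Perm (Fin n → Bool) := Function.Involutive.toPerm _ (negA_involutive (n := n))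

/-- Walsh character -/
def chi (S : Finset (Fin n)) (ω : Fin n → Bool) : ℝ := ∏ i ∈ S, sg (ω i)

lemma chi_empty (ω : Fin n → Bool) : chi ∅ ω = 1 := by simp [chi]

lemma chi_flip (S : Finset (Fin n)) (i : Fin n) (ω : Fin n → Bool) :
    chi S (flip i ω) = (if i ∈ S then -1 else 1) * chi S ω := by
  by_cases hi : i ∈ S
  · rw [if_pos hi, chi, chi, ← Finset.mul_prod_erase S _ hi, ← Finset.mul_prod_erase S _ hi]
    have h1 : ∀ k ∈ S.erase i, sg (flip i ω k) = sg (ω k) := by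
      intro k hk
      rw [flip_apply_ne _ _ _ (Finset.ne_of_mem_erase hk)]
    rw [Finset.prod_congr rfl h1, flip_apply_self, sg_not]
    ring
  · rw [if_neg hi, one_mul, chi, chi]
    refine Finset.prod_congr rfl fun k hk => ?_
    exact congrArg sg (flip_apply_ne _ _ _ (fun h => hi (h ▸ hk)))

/-- dual orthogonality of Walsh characters -/
lemma chi_dual (ω ω' : Fin n → Bool) :
    ∑ S : Finset (Fin n), chi S ω * chi S ω' = if ω = ω' then (2:ℝ)^n else 0 := by
  have h1 : ∀ S : Finset (Fin n), chi S ω * chi S ω'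
      = (∏ i ∈ S, (sg (ω i) * sg (ω' i))) * ∏ i ∈ (univ \ S), (1:ℝ) := by
    intro S; rw [Finset.prod_mul_distrib, Finset.prod_const_one, mul_one]; rfl
  have h2 : ∑ S : Finset (Fin n), chi S ω * chi S ω'
      = ∏ i : Fin n, (sg (ω i) * sg (ω' i) + 1) := by
    rw [Finset.prod_add]
    rw [← Finset.powerset_univ]
    exact Finset.sum_congr rfl fun S _ => h1 S
  rw [h2]
  by_cases h : ω = ω'
  · subst h
    rw [if_pos rfl]
    have : ∀ i : Fin n, sg (ω i) * sg (ω i) + 1 = 2 := by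
      intro i; rw [sg_mul_self]; norm_num
    rw [Finset.prod_congr rfl (fun i _ => this i), Finset.prod_const]
    simp
  · rw [if_neg h]
    obtain ⟨i, hi⟩ : ∃ i, ω i ≠ ω' i := by
      by_contra hc
      push_neg at hc
      exact h (funext hc)
    apply Finset.prod_eq_zero (Finset.mem_univ i)
    cases hω : ω i <;> cases hω' : ω' i <;> simp_all [sg]

/-- Fourier coefficient (unnormalized) -/
def coef (f : (Fin n → Bool) → ℝ) (S : Finset (Fin n)) : ℝ := ∑ ω, f ω * chi S ω

/-- Parseval -/
lemma parseval (f : (Fin n → Bool) → ℝ) :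
    ∑ S : Finset (Fin n), (coef f S)^2 = (2:ℝ)^n * ∑ ω, (f ω)^2 := by
  have h1 : ∀ S : Finset (Fin n), (coef f S)^2
      = ∑ ω, ∑ ω', (f ω * f ω') * (chi S ω * chi S ω') := by
    intro S
    rw [coef, sq, Finset.sum_mul_sum]
    exact Finset.sum_congr rfl fun ω _ => Finset.sum_congr rfl fun ω' _ => by ring
  rw [Finset.sum_congr rfl fun S _ => h1 S]
  rw [Finset.sum_comm]
  have h2 : ∀ ω, ∑ S : Finset (Fin n), ∑ ω', (f ω * f ω') * (chi S ω * chi S ω')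
      = (2:ℝ)^n * (f ω)^2 := by
    intro ω
    rw [Finset.sum_comm]
    have h3 : ∀ ω', ∑ S : Finset (Fin n), (f ω * f ω') * (chi S ω * chi S ω')
        = (f ω * f ω') * (if ω = ω' then (2:ℝ)^n else 0) := by
      intro ω'
      rw [← Finset.mul_sum, chi_dual]
    rw [Finset.sum_congr rfl fun ω' _ => h3 ω']
    simp only [mul_ite, mul_zero]
    rw [Finset.sum_ite_eq (univ : Finset (Fin n → Bool)) ω (fun ω' => f ω * f ω' * (2:ℝ)^n)]
    simp [sq]
    ring
  rw [Finset.sum_congr rfl fun ω _ => h2 ω, ← Finset.mul_sum]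


/-- reindexing a sum by a flip -/
lemma sum_flip (i : Fin n) (F : (Fin n → Bool) → ℝ) :
    ∑ ω, F (flip i ω) = ∑ ω, F ω := by
  exact Equiv.sum_comp (flipP i) F

lemma sum_negA (F : (Fin n → Bool) → ℝ) :
    ∑ ω, F (negA ω) = ∑ ω, F ω := by
  exact Equiv.sum_comp (negP (n := n)) F

/-- coefficient of the discrete derivative -/
lemma coef_deriv (f : (Fin n → Bool) → ℝ) (i : Fin n) (S : Finset (Fin n)) :
    coef (fun ω => (f ω - f (flip i ω))/2) S = if i ∈ S then coef f S else 0 := by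
  have h1 : ∑ ω, f (flip i ω) * chi S ω
      = (if i ∈ S then -1 else 1) * coef f S := by
    have h2 : ∑ ω, f (flip i ω) * chi S ω = ∑ ω, f (flip i (flip i ω)) * chi S (flip i ω) :=
      (sum_flip i (fun ω => f (flip i ω) * chi S ω)).symm
    rw [h2]
    have h3 : ∀ ω, f (flip i (flip i ω)) * chi S (flip i ω)
        = (if i ∈ S then -1 else 1) * (f ω * chi S ω) := by
      intro ω
      rw [flip_involutive i ω, chi_flip]
      ring
    rw [Finset.sum_congr rfl fun ω _ => h3 ω, ← Finset.mul_sum]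
    rfl
  have h4 : coef (fun ω => (f ω - f (flip i ω))/2) S
      = (coef f S - ∑ ω, f (flip i ω) * chi S ω) / 2 := by
    rw [coef, coef, ← Finset.sum_sub_distrib, Finset.sum_div]
    exact Finset.sum_congr rfl fun ω _ => by ring
  rw [h4, h1]
  by_cases hi : i ∈ S <;> simp [hi]

/-- second moment of a Rademacher sum -/
lemma sum_sg_mul (j k : Fin n) :
    ∑ ω : Fin n → Bool, sg (ω j) * sg (ω k) = if j = k then (2:ℝ)^n else 0 := by
  by_cases h : j = k
  · subst h
    rw [if_pos rfl]
    rw [Finset.sum_congr rfl fun ω _ => sg_mul_self (ω j)]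
    simp [Finset.card_univ]
  · rw [if_neg h]
    have h1 : ∑ ω : Fin n → Bool, sg (ω j) * sg (ω k)
        = ∑ ω : Fin n → Bool, sg (flip j ω j) * sg (flip j ω k) :=
      (sum_flip j (fun ω => sg (ω j) * sg (ω k))).symm
    have h2 : ∀ ω : Fin n → Bool, sg (flip j ω j) * sg (flip j ω k)
        = - (sg (ω j) * sg (ω k)) := by
      intro ω
      rw [flip_apply_self, flip_apply_ne _ _ _ (Ne.symm h), sg_not]
      ring
    have h3 := h1.trans (Finset.sum_congr rfl fun ω _ => h2 ω)
    rw [Finset.sum_neg_distrib] at h3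
    linarith

lemma sum_S_sq (a : Fin n → ℝ) :
    ∑ ω : Fin n → Bool, (∑ j, a j * sg (ω j))^2 = (2:ℝ)^n * ∑ j, (a j)^2 := by
  have h1 : ∀ ω : Fin n → Bool, (∑ j, a j * sg (ω j))^2
      = ∑ j, ∑ k, (a j * a k) * (sg (ω j) * sg (ω k)) := by
    intro ω
    rw [sq, Finset.sum_mul_sum]
    exact Finset.sum_congr rfl fun j _ => Finset.sum_congr rfl fun k _ => by ring
  rw [Finset.sum_congr rfl fun ω _ => h1 ω, Finset.sum_comm]
  have h2 : ∀ j, ∑ ω : Fin n → Bool, ∑ k, (a j * a k) * (sg (ω j) * sg (ω k))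
      = (2:ℝ)^n * (a j)^2 := by
    intro j
    rw [Finset.sum_comm]
    have h3 : ∀ k, ∑ ω : Fin n → Bool, (a j * a k) * (sg (ω j) * sg (ω k))
        = (a j * a k) * (if j = k then (2:ℝ)^n else 0) := by
      intro k
      rw [← Finset.mul_sum, sum_sg_mul]
    rw [Finset.sum_congr rfl fun k _ => h3 k]
    simp only [mul_ite, mul_zero]
    rw [Finset.sum_ite_eq (univ : Finset (Fin n)) j (fun k => a j * a k * (2:ℝ)^n)]
    simp [sq]
    ring
  rw [Finset.sum_congr rfl fun j _ => h2 j, ← Finset.mul_sum]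


section Szarek

variable (a : Fin n → ℝ)

/-- the Rademacher sum -/
def rad (a : Fin n → ℝ) (ω : Fin n → Bool) : ℝ := ∑ j, a j * sg (ω j)

/-- the absolute value of the Rademacher sum -/
def fabs (a : Fin n → ℝ) (ω : Fin n → Bool) : ℝ := |rad a ω|

lemma fabs_negA (ω : Fin n → Bool) : fabs a (negA ω) = fabs a ω := by
  have : rad a (negA ω) = - rad a ω := by
    rw [rad, rad, ← Finset.sum_neg_distrib]
    exact Finset.sum_congr rfl fun j _ => by rw [negA, sg_not]; ring
  rw [fabs, fabs, this, abs_neg]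

lemma coef_fabs_singleton (i : Fin n) : coef (fabs a) {i} = 0 := by
  have h1 : coef (fabs a) {i} = ∑ ω, fabs a ω * sg (ω i) := by
    rw [coef]
    exact Finset.sum_congr rfl fun ω _ => by rw [chi, Finset.prod_singleton]
  have h2 : ∑ ω, fabs a ω * sg (ω i)
      = ∑ ω, fabs a (negA ω) * sg (negA ω i) :=
    (sum_negA (fun ω => fabs a ω * sg (ω i))).symm
  have h3 : ∀ ω : Fin n → Bool, fabs a (negA ω) * sg (negA ω i)
      = - (fabs a ω * sg (ω i)) := by
    intro ω
    rw [fabs_negA]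
    have : sg (negA ω i) = - sg (ω i) := sg_not (ω i)
    rw [this]
    ring
  have h4 := h2.trans (Finset.sum_congr rfl fun ω _ => h3 ω)
  rw [Finset.sum_neg_distrib] at h4
  rw [h1]
  linarith

lemma deriv_sq_le (i : Fin n) (ω : Fin n → Bool) :
    ((fabs a ω - fabs a (flip i ω))/2)^2 ≤ (a i)^2 := by
  have hdiff : rad a ω - rad a (flip i ω) = 2 * (a i * sg (ω i)) := by
    rw [rad, rad, ← Finset.sum_sub_distrib]
    rw [Finset.sum_eq_single i]
    · rw [flip_apply_self, sg_not]; ring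
    · intro k _ hk
      rw [flip_apply_ne _ _ _ hk]; ring
    · intro h; exact absurd (Finset.mem_univ i) h
  have h1 : |fabs a ω - fabs a (flip i ω)| ≤ |rad a ω - rad a (flip i ω)| := by
    rw [fabs, fabs]
    exact abs_abs_sub_abs_le_abs_sub _ _
  rw [hdiff, abs_mul, abs_mul, abs_sg, abs_two] at h1
  have h2 : |(fabs a ω - fabs a (flip i ω))/2| ≤ |a i| := by
    rw [abs_div, abs_two]
    linarith
  calc ((fabs a ω - fabs a (flip i ω))/2)^2
      = |(fabs a ω - fabs a (flip i ω))/2|^2 := (sq_abs _).symm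
    _ ≤ |a i|^2 := by
        apply pow_le_pow_left₀ (abs_nonneg _) h2
    _ = (a i)^2 := sq_abs _

/-- Szarek's inequality, finite sum form -/
lemma szarek : (2:ℝ)^n * Real.sqrt (∑ j, (a j)^2)
    ≤ Real.sqrt 2 * ∑ ω : Fin n → Bool, |∑ j, a j * sg (ω j)| := by
  set A := ∑ j, (a j)^2 with hA
  have hAnn : 0 ≤ A := Finset.sum_nonneg fun j _ => sq_nonneg _
  set F := ∑ ω : Fin n → Bool, fabs a ω with hF
  have hFnn : 0 ≤ F := Finset.sum_nonneg fun ω _ => abs_nonneg _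
  -- Parseval for fabs
  have hpar : ∑ S : Finset (Fin n), (coef (fabs a) S)^2 = (2:ℝ)^n * (2:ℝ)^n * A := by
    rw [parseval (fabs a)]
    have : ∑ ω, (fabs a ω)^2 = (2:ℝ)^n * A := by
      rw [← sum_S_sq a]
      exact Finset.sum_congr rfl fun ω _ => by rw [fabs, sq_abs]; rfl
    rw [this]; ring
  -- coefficient at ∅
  have hempty : coef (fabs a) ∅ = F := by
    rw [coef, hF]
    exact Finset.sum_congr rfl fun ω _ => by rw [chi_empty, mul_one]
  -- split off ∅
  have hsplit : ∑ S : Finset (Fin n), (coef (fabs a) S)^2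
      = F^2 + ∑ S ∈ (univ : Finset (Finset (Fin n))).erase ∅, (coef (fabs a) S)^2 := by
    rw [← Finset.add_sum_erase _ _ (Finset.mem_univ (∅ : Finset (Fin n))), hempty]
  -- level comparison
  have hlevel : ∑ S ∈ (univ : Finset (Finset (Fin n))).erase ∅, (coef (fabs a) S)^2
      ≤ ∑ S : Finset (Fin n), ((S.card : ℝ) * (coef (fabs a) S)^2) / 2 := by
    have step1 : ∑ S ∈ (univ : Finset (Finset (Fin n))).erase ∅, (coef (fabs a) S)^2
        ≤ ∑ S ∈ (univ : Finset (Finset (Fin n))).erase ∅,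
            ((S.card : ℝ) * (coef (fabs a) S)^2) / 2 := by
      apply Finset.sum_le_sum
      intro S hS
      have hSne : S ≠ ∅ := Finset.ne_of_mem_erase hS
      rcases eq_or_ne S.card 1 with hc | hc
      · obtain ⟨i, rfl⟩ := Finset.card_eq_one.mp hc
        rw [coef_fabs_singleton]
        simp
      · have hpos : 0 < S.card := Finset.card_pos.mpr (Finset.nonempty_of_ne_empty hSne)
        have h2 : 2 ≤ S.card := by omega
        have : (2:ℝ) ≤ (S.card : ℝ) := by exact_mod_cast h2
        nlinarith [sq_nonneg (coef (fabs a) S)]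
    refine step1.trans (Finset.sum_le_sum_of_subset_of_nonneg (Finset.erase_subset _ _) ?_)
    intro S _ _
    positivity
  -- Dirichlet form
  have hdir : ∑ S : Finset (Fin n), (S.card : ℝ) * (coef (fabs a) S)^2
      ≤ (2:ℝ)^n * ((2:ℝ)^n * A) := by
    have hcard : ∀ S : Finset (Fin n), (S.card : ℝ) * (coef (fabs a) S)^2
        = ∑ i : Fin n, (if i ∈ S then (coef (fabs a) S)^2 else 0) := by
      intro S
      rw [Finset.sum_ite_mem, Finset.univ_inter, Finset.sum_const, nsmul_eq_mul]
    rw [Finset.sum_congr rfl fun S _ => hcard S, Finset.sum_comm]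
    have hi : ∀ i : Fin n, ∑ S : Finset (Fin n), (if i ∈ S then (coef (fabs a) S)^2 else 0)
        ≤ (2:ℝ)^n * ((2:ℝ)^n * (a i)^2) := by
      intro i
      have hco : ∀ S : Finset (Fin n), (if i ∈ S then (coef (fabs a) S)^2 else 0)
          = (coef (fun ω => (fabs a ω - fabs a (flip i ω))/2) S)^2 := by
        intro S
        rw [coef_deriv]
        by_cases h : i ∈ S <;> simp [h]
      rw [Finset.sum_congr rfl fun S _ => hco S, parseval]
      have hb : ∑ ω : Fin n → Bool, ((fabs a ω - fabs a (flip i ω))/2)^2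
          ≤ ∑ ω : Fin n → Bool, (a i)^2 :=
        Finset.sum_le_sum fun ω _ => deriv_sq_le a i ω
      have hc : ∑ ω : Fin n → Bool, (a i)^2 = (2:ℝ)^n * (a i)^2 := by
        rw [Finset.sum_const, Finset.card_univ, nsmul_eq_mul]
        norm_num
      exact mul_le_mul_of_nonneg_left (hb.trans_eq hc) (by positivity)
    calc ∑ i : Fin n, ∑ S : Finset (Fin n), (if i ∈ S then (coef (fabs a) S)^2 else 0)
        ≤ ∑ i : Fin n, (2:ℝ)^n * ((2:ℝ)^n * (a i)^2) := Finset.sum_le_sum fun i _ => hi i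
      _ = (2:ℝ)^n * ((2:ℝ)^n * A) := by
          rw [hA, Finset.mul_sum, Finset.mul_sum]
  -- put everything together
  have e1 : ∑ S : Finset (Fin n), ((S.card : ℝ) * (coef (fabs a) S)^2) / 2
      = (∑ S : Finset (Fin n), (S.card : ℝ) * (coef (fabs a) S)^2) / 2 :=
    (Finset.sum_div _ _ _).symm
  have hkey : (2:ℝ)^n * (2:ℝ)^n * A ≤ 2 * F^2 := by
    rw [e1] at hlevel
    linarith [hpar, hsplit, hlevel, hdir]
  have hgoal : (2:ℝ)^n * Real.sqrt A ≤ Real.sqrt 2 * F := by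
    have eL : Real.sqrt ((2:ℝ)^n * (2:ℝ)^n * A) = (2:ℝ)^n * Real.sqrt A := by
      rw [Real.sqrt_mul (by positivity), Real.sqrt_mul_self (by positivity)]
    have eR : Real.sqrt (2 * F^2) = Real.sqrt 2 * F := by
      rw [Real.sqrt_mul (by norm_num), Real.sqrt_sq hFnn]
    calc (2:ℝ)^n * Real.sqrt A = Real.sqrt ((2:ℝ)^n * (2:ℝ)^n * A) := eL.symm
      _ ≤ Real.sqrt (2 * F^2) := Real.sqrt_le_sqrt hkey
      _ = Real.sqrt 2 * F := eR
  exact hgoal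

end Szarek

lemma single_eq_ite (j : Fin n) : (Pi.single j (1:ℝ) : Fin n → ℝ) = fun k => if j = k then 1 else 0 := by
  funext k
  by_cases h : j = k
  · subst h; simp
  · rw [Pi.single_eq_of_ne (Ne.symm h), if_neg h]

lemma eval_sum (L : (Fin n → ℝ) →ₗ[ℝ] ℝ) (y : Fin n → ℝ) :
    L y = ∑ j, y j * L (Pi.single j 1) := by
  conv_lhs => rw [pi_eq_sum_univ y]
  rw [map_sum]
  refine Finset.sum_congr rfl fun j _ => ?_
  rw [single_eq_ite, map_smul, smul_eq_mul]

lemma row_sum_bound (T : (Fin n → ℝ) →ₗ[ℝ] (Fin n → ℝ) →ₗ[ℝ] ℝ) (C : ℝ)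
    (hC : ∀ x y : Fin n → ℝ, (∀ i, |x i| ≤ 1) → (∀ i, |y i| ≤ 1) → |T x y| ≤ C)
    (y : Fin n → ℝ) (hy : ∀ j, |y j| ≤ 1) :
    ∑ i, |T (Pi.single i 1) y| ≤ C := by
  set x : Fin n → ℝ := fun i => if 0 ≤ T (Pi.single i 1) y then 1 else -1 with hx
  have hxb : ∀ i, |x i| ≤ 1 := by
    intro i
    rw [hx]
    dsimp only
    split <;> norm_num
  have hTxy : T x y = ∑ i, |T (Pi.single i 1) y| := by
    have h1 : T x y = T.flip y x := rfl
    rw [h1, eval_sum (T.flip y) x]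
    refine Finset.sum_congr rfl fun i _ => ?_
    have h2 : T.flip y (Pi.single i 1) = T (Pi.single i 1) y := rfl
    rw [h2, hx]
    dsimp only
    by_cases h : 0 ≤ T (Pi.single i 1) y
    · rw [if_pos h, abs_of_nonneg h, one_mul]
    · rw [if_neg h, abs_of_neg (lt_of_not_ge h)]
      ring
  calc ∑ i, |T (Pi.single i 1) y| = T x y := hTxy.symm
    _ ≤ |T x y| := le_abs_self _
    _ ≤ C := hC x y hxb hy

end Stmt19

theorem stmt_19 (n : ℕ) (hn : 0 < n)
    (T : (Fin n → ℝ) →ₗ[ℝ] (Fin n → ℝ) →ₗ[ℝ] ℝ) (C : ℝ)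
    (hC : ∀ x y : Fin n → ℝ, (∀ i, |x i| ≤ 1) → (∀ i, |y i| ≤ 1) → |T x y| ≤ C) :
    ∑ i : Fin n, Real.sqrt (∑ j : Fin n, (T (Pi.single i 1) (Pi.single j 1)) ^ 2) ≤
      Real.sqrt 2 * C := by
  classical
  open Stmt19 Finset in
  set a : Fin n → Fin n → ℝ := fun i j => T (Pi.single i 1) (Pi.single j 1) with ha
  -- bound for each sign pattern
  have key : ∀ ω : Fin n → Bool, ∑ i, |∑ j, a i j * sg (ω j)| ≤ C := by
    intro ω
    have hy : ∀ j, |sg (ω j)| ≤ 1 := fun j => le_of_eq (abs_sg (ω j))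
    have hterm : ∀ i, ∑ j, a i j * sg (ω j) = T (Pi.single i 1) (fun j => sg (ω j)) := by
      intro i
      rw [eval_sum (T (Pi.single i 1)) (fun j => sg (ω j))]
      exact Finset.sum_congr rfl fun j _ => by rw [ha]; ring
    calc ∑ i, |∑ j, a i j * sg (ω j)|
        = ∑ i, |T (Pi.single i 1) (fun j => sg (ω j))| :=
          Finset.sum_congr rfl fun i _ => by rw [hterm i]
      _ ≤ C := row_sum_bound T C hC _ hy
  -- sum Szarek over rows
  have hsz : ∀ i : Fin n, (2:ℝ)^n * Real.sqrt (∑ j, (a i j)^2)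
      ≤ Real.sqrt 2 * ∑ ω : Fin n → Bool, |∑ j, a i j * sg (ω j)| := fun i => szarek (a i)
  have hsum : (2:ℝ)^n * ∑ i, Real.sqrt (∑ j, (a i j)^2)
      ≤ Real.sqrt 2 * ((2:ℝ)^n * C) := by
    calc (2:ℝ)^n * ∑ i, Real.sqrt (∑ j, (a i j)^2)
        = ∑ i, (2:ℝ)^n * Real.sqrt (∑ j, (a i j)^2) := Finset.mul_sum _ _ _
      _ ≤ ∑ i, Real.sqrt 2 * ∑ ω : Fin n → Bool, |∑ j, a i j * sg (ω j)| :=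
          Finset.sum_le_sum fun i _ => hsz i
      _ = Real.sqrt 2 * ∑ i, ∑ ω : Fin n → Bool, |∑ j, a i j * sg (ω j)| :=
          (Finset.mul_sum _ _ _).symm
      _ = Real.sqrt 2 * ∑ ω : Fin n → Bool, ∑ i, |∑ j, a i j * sg (ω j)| := by
          rw [Finset.sum_comm]
      _ ≤ Real.sqrt 2 * ∑ ω : Fin n → Bool, C := by
          refine mul_le_mul_of_nonneg_left (Finset.sum_le_sum fun ω _ => key ω) (Real.sqrt_nonneg 2)
      _ = Real.sqrt 2 * ((2:ℝ)^n * C) := by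
          rw [Finset.sum_const, Finset.card_univ, nsmul_eq_mul]
          norm_num
  have hpow : (0:ℝ) < (2:ℝ)^n := by positivity
  have := hsum
  rw [show Real.sqrt 2 * ((2:ℝ)^n * C) = (2:ℝ)^n * (Real.sqrt 2 * C) by ring] at this
  exact le_of_mul_le_mul_left this hpow
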